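/- Let $a, b$ be real numbers with $a + b > 0$ and $0 \le b < Q$. Define $v(x) = \int_{\{y : \rho(y) \le 1\}} \rho(x)^{-a}\,\rho(y^{-1}x)^{-Q+a+b}\,\rho(y)^{-b}\,dV(y)$ for $x$ in the Heisenberg group $H_n$. Then there exist constants $c_1, c_2 > 0$ and $R_0 \ge 1$ such that $c_1\,\rho(x)^{b-Q} \le v(x) \le c_2\,\rho(x)^{b-Q}$ for all $x$ with $\rho(x) \ge R_0$; that is, $v$ behaves like a constant multiple of $\rho^{-Q+b}$ at infinity. -/

import Mathlib

open MeasureTheory ENNReal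

noncomputable section

/-- The underlying space of the Heisenberg group `H_n = ℂⁿ × ℝ`. -/
abbrev H (n : ℕ) := (Fin n → ℂ) × ℝ

/-- Heisenberg group multiplication. -/
def Hmul {n : ℕ} (x y : H n) : H n :=
  (x.1 + y.1, x.2 + y.2 + 2 * (∑ j, x.1 j * (starRingEnd ℂ) (y.1 j)).im)

/-- Heisenberg group inverse. -/
def Hinv {n : ℕ} (x : H n) : H n := (-x.1, -x.2)

/-- The Korányi gauge `ρ(z,t) = (|z|⁴ + t²)^{1/4}`. -/
def Hrho {n : ℕ} (x : H n) : ℝ :=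
  ((∑ j, ‖x.1 j‖ ^ 2) ^ 2 + x.2 ^ 2) ^ ((1 : ℝ) / 4)

/-- `σ = (1 + ρ⁴)^{1/4}`. -/
def Hsigma {n : ℕ} (x : H n) : ℝ := (1 + Hrho x ^ 4) ^ ((1 : ℝ) / 4)

/-- Homogeneous dimension `Q = 2n+2`. -/
def hQ (n : ℕ) : ℝ := 2 * n + 2

/-- Weighted Lebesgue norm `‖u‖_{p,δ}` (with weight `σ`). -/
def wnorm {n : ℕ} (p : ℝ≥0∞) (δ : ℝ) (u : H n → ℝ) : ℝ≥0∞ :=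
  if p = ∞ then essSup (fun x => ENNReal.ofReal (Hsigma x ^ (-δ) * |u x|)) volume
  else (∫⁻ x : H n,
      ENNReal.ofReal (|u x| ^ p.toReal * Hsigma x ^ (-δ * p.toReal - hQ n))) ^ (1 / p.toReal)

/-- Weighted Lebesgue norm `‖u‖'_{p,δ}` (with weight `ρ`). -/
def wnorm' {n : ℕ} (p : ℝ≥0∞) (δ : ℝ) (u : H n → ℝ) : ℝ≥0∞ :=
  if p = ∞ then essSup (fun x => ENNReal.ofReal (Hrho x ^ (-δ) * |u x|)) volume
  else (∫⁻ x : H n,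
      ENNReal.ofReal (|u x| ^ p.toReal * Hrho x ^ (-δ * p.toReal - hQ n))) ^ (1 / p.toReal)

/-- The horizontal vector field `e_a` at the point `x`, as a tangent vector:
`e_j = ∂_{x_j} + 2 y_j ∂_t`, `e_{n+j} = ∂_{y_j} - 2 x_j ∂_t`. -/
def hvf {n : ℕ} (a : Fin n ⊕ Fin n) (x : H n) : H n :=
  match a with
  | .inl j => (Pi.single j 1, 2 * (x.1 j).im)
  | .inr j => (Pi.single j Complex.I, -(2 * (x.1 j).re))

/-- Derivative of `u` along the horizontal vector field `e_a`. -/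
def hderiv {n : ℕ} (a : Fin n ⊕ Fin n) (u : H n → ℝ) (x : H n) : ℝ :=
  fderiv ℝ u x (hvf a x)

/-- Iterated horizontal derivative `e_{a_1} ⋯ e_{a_j} u`. -/
def hderivList {n : ℕ} : List (Fin n ⊕ Fin n) → (H n → ℝ) → H n → ℝ
  | [], u => u
  | a :: l, u => hderiv a (hderivList l u)

/-- Length of the `j`-th horizontal gradient `|∇ʲu|`. -/
def gradLen {n : ℕ} (j : ℕ) (u : H n → ℝ) (x : H n) : ℝ :=
  Real.sqrt (∑ w : Fin j → (Fin n ⊕ Fin n), (hderivList (List.ofFn w) u x) ^ 2)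

/-- Weighted Folland–Stein norm `‖u‖_{k,p,δ}`. -/
def FSnorm {n : ℕ} (k : ℕ) (p : ℝ≥0∞) (δ : ℝ) (u : H n → ℝ) : ℝ≥0∞ :=
  ∑ j ∈ Finset.range (k + 1), wnorm p (δ - j) (gradLen j u)

/-- Weighted Folland–Stein norm `‖u‖'_{k,p,δ}`. -/
def FSnorm' {n : ℕ} (k : ℕ) (p : ℝ≥0∞) (δ : ℝ) (u : H n → ℝ) : ℝ≥0∞ :=
  ∑ j ∈ Finset.range (k + 1), wnorm' p (δ - j) (gradLen j u)

/-- The sub-Laplacian `Δ_b u = Σ_a e_a (e_a u)`. -/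
def subLap {n : ℕ} (u : H n → ℝ) (x : H n) : ℝ :=
  ∑ a : Fin n ⊕ Fin n, hderiv a (hderiv a u) x

/-- Heisenberg dilation `δ_R(z,t) = (Rz, R²t)`. -/
def Hdil {n : ℕ} (R : ℝ) (x : H n) : H n := (R • x.1, R ^ 2 * x.2)

def Kker {n : ℕ} (a b : ℝ) (x y : H n) : ℝ :=
  Hrho x ^ (-a) * Hrho (Hmul (Hinv y) x) ^ (-hQ n + a + b) * Hrho y ^ (-b)

/-!
For `ρ(y) ≤ 1 ≤ 4 ≤ ρ(x)` the quasi-triangle inequality `ρ(uv) ≤ 2 (ρ(u) + ρ(v))`, applied to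
`y⁻¹x` and to `x = y (y⁻¹x)`, gives `ρ(x)/4 ≤ ρ(y⁻¹x) ≤ 4 ρ(x)`. Hence the kernel is comparable to
`ρ(x)^(b-Q) ρ(y)^(-b)` uniformly on the unit gauge ball `B`, and since `ρ^(-b) ≥ 1` on `B`,
`v(x) ≍ ρ(x)^(b-Q)` once `∫_B ρ^(-b) < ∞`. For that, `ρ` dominates every `|Re z_j|`, `|Im z_j|`
and `|t|^(1/2)`; writing `ρ^(-b)` as the product of `2n+2` factors `ρ^(-α)`, `α = b/Q < 1`,
bounds it on `B` by `∏ |Re z_j|^(-α) |Im z_j|^(-α) · |t|^(-α)`, a product of integrable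
one-variable singularities.
-/

lemma Real.rpow_le_rpow_abs_mul_of_mem_Icc {c u v : ℝ} (e : ℝ) (hc : 0 < c) (hv : 0 < v)
    (hu : u ∈ Set.Icc (v / c) (c * v)) : u ^ e ≤ c ^ |e| * v ^ e := by
  have hu0 : 0 < u := (div_pos hv hc).trans_le hu.1
  rcases le_or_gt 0 e with he | he
  · calc u ^ e ≤ (c * v) ^ e := Real.rpow_le_rpow hu0.le hu.2 he
      _ = c ^ |e| * v ^ e := by rw [abs_of_nonneg he, Real.mul_rpow hc.le hv.le]
  · calc u ^ e ≤ (v / c) ^ e := Real.rpow_le_rpow_of_nonpos (div_pos hv hc) hu.1 he.le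
      _ = c ^ |e| * v ^ e := by
        rw [abs_of_neg he, Real.div_rpow hv.le hc.le, Real.rpow_neg hc.le, div_eq_inv_mul]

lemma Real.inv_rpow_abs_mul_le_rpow_of_mem_Icc {c u v : ℝ} (e : ℝ) (hc : 0 < c) (hv : 0 < v)
    (hu : u ∈ Set.Icc (v / c) (c * v)) : (c ^ |e|)⁻¹ * v ^ e ≤ u ^ e := by
  have hu0 : 0 < u := (div_pos hv hc).trans_le hu.1
  rw [inv_mul_le_iff₀ (Real.rpow_pos_of_pos hc _)]
  refine Real.rpow_le_rpow_abs_mul_of_mem_Icc e hc hu0 ⟨?_, ?_⟩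
  · rw [div_le_iff₀ hc]; linarith [hu.2]
  · rw [← div_le_iff₀' hc]; exact hu.1

namespace Heisenberg

variable {n : ℕ}

def horiz (x : H n) : EuclideanSpace ℂ (Fin n) := WithLp.toLp 2 x.1

lemma norm_horiz_sq (x : H n) : ‖horiz x‖ ^ 2 = ∑ j, ‖x.1 j‖ ^ 2 :=
  EuclideanSpace.norm_sq_eq _

lemma Hrho_nonneg (x : H n) : 0 ≤ Hrho x :=
  Real.rpow_nonneg (by positivity) _

lemma Hrho_pow_four (x : H n) : Hrho x ^ 4 = ‖horiz x‖ ^ 4 + x.2 ^ 2 := by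
  have h : (0:ℝ) ≤ (∑ j, ‖x.1 j‖ ^ 2) ^ 2 + x.2 ^ 2 := by positivity
  rw [Hrho, ← Real.rpow_natCast, ← Real.rpow_mul h, show (4:ℕ) = (2:ℕ) * 2 from rfl, pow_mul,
    norm_horiz_sq]
  norm_num

lemma norm_horiz_le_Hrho (x : H n) : ‖horiz x‖ ≤ Hrho x := by
  refine le_of_pow_le_pow_left₀ four_ne_zero (Hrho_nonneg x) ?_
  rw [Hrho_pow_four]
  nlinarith [sq_nonneg x.2]

lemma abs_snd_le_Hrho_sq (x : H n) : |x.2| ≤ Hrho x ^ 2 := by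
  refine abs_le_of_sq_le_sq ?_ (by positivity)
  rw [← pow_mul, Hrho_pow_four]
  nlinarith [pow_nonneg (norm_nonneg (horiz x)) 4]

lemma norm_apply_le_Hrho (x : H n) (j : Fin n) : ‖x.1 j‖ ≤ Hrho x :=
  (PiLp.norm_apply_le (horiz x) j).trans (norm_horiz_le_Hrho x)

lemma Hrho_pos_of_snd_ne_zero {x : H n} (hx : x.2 ≠ 0) : 0 < Hrho x := by
  refine (Hrho_nonneg x).lt_of_ne' fun h => hx ?_
  simpa [h] using abs_snd_le_Hrho_sq x

lemma Hrho_zero : Hrho (0 : H n) = 0 := by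
  simp [Hrho]

lemma continuous_Hrho : Continuous (Hrho (n := n)) := by
  unfold Hrho
  fun_prop (disch := norm_num)

lemma Hrho_Hinv (x : H n) : Hrho (Hinv x) = Hrho x := by
  simp [Hrho, Hinv]

lemma Hmul_Hinv_cancel_left (y x : H n) : Hmul y (Hmul (Hinv y) x) = x := by
  have him : (∑ j, y.1 j * (starRingEnd ℂ) (y.1 j)).im = 0 := by
    simp [Complex.mul_conj]
  ext1
  · simp [Hmul, Hinv]
  · simp only [Hmul, Hinv, Pi.neg_apply, Pi.add_apply, map_add, map_neg, mul_add, mul_neg, neg_mul,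
      Finset.sum_add_distrib, Finset.sum_neg_distrib, Complex.add_im, Complex.neg_im, him]
    ring

lemma norm_inner_horiz_le (u v : H n) :
    ‖∑ j, u.1 j * (starRingEnd ℂ) (v.1 j)‖ ≤ ‖horiz u‖ * ‖horiz v‖ := by
  have h := norm_inner_le_norm (𝕜 := ℂ) (horiz v) (horiz u)
  rwa [EuclideanSpace.inner_eq_star_dotProduct, dotProduct, mul_comm ‖horiz v‖] at h

lemma norm_horiz_Hmul_le (u v : H n) : ‖horiz (Hmul u v)‖ ≤ Hrho u + Hrho v :=
  (norm_add_le (horiz u) (horiz v)).trans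
    (add_le_add (norm_horiz_le_Hrho u) (norm_horiz_le_Hrho v))

lemma abs_snd_Hmul_le (u v : H n) : |(Hmul u v).2| ≤ (Hrho u + Hrho v) ^ 2 := by
  have him : |(∑ j, u.1 j * (starRingEnd ℂ) (v.1 j)).im| ≤ Hrho u * Hrho v :=
    (Complex.abs_im_le_norm _).trans <| (norm_inner_horiz_le u v).trans <|
      mul_le_mul (norm_horiz_le_Hrho u) (norm_horiz_le_Hrho v) (norm_nonneg _) (Hrho_nonneg u)
  have hu := abs_snd_le_Hrho_sq u
  have hv := abs_snd_le_Hrho_sq v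
  calc |(Hmul u v).2|
      ≤ |u.2| + |v.2| + |2 * (∑ j, u.1 j * (starRingEnd ℂ) (v.1 j)).im| :=
        (abs_add_le _ _).trans (add_le_add_left (abs_add_le _ _) _)
    _ ≤ (Hrho u + Hrho v) ^ 2 := by
        rw [abs_mul, abs_two]
        nlinarith

lemma Hrho_Hmul_le (u v : H n) : Hrho (Hmul u v) ≤ 2 * (Hrho u + Hrho v) := by
  have hs : 0 ≤ Hrho u + Hrho v := add_nonneg (Hrho_nonneg u) (Hrho_nonneg v)
  have hz : ‖horiz (Hmul u v)‖ ^ 4 ≤ (Hrho u + Hrho v) ^ 4 :=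
    pow_le_pow_left₀ (norm_nonneg _) (norm_horiz_Hmul_le u v) 4
  have ht : (Hmul u v).2 ^ 2 ≤ (Hrho u + Hrho v) ^ 4 := by
    rw [← sq_abs, show 4 = 2 * 2 from rfl, pow_mul]
    exact pow_le_pow_left₀ (abs_nonneg _) (abs_snd_Hmul_le u v) 2
  refine le_of_pow_le_pow_left₀ four_ne_zero (by positivity) ?_
  rw [Hrho_pow_four, mul_pow]
  nlinarith [pow_nonneg hs 4]

lemma Hrho_Hmul_Hinv_mem_Icc {x y : H n} (hy : Hrho y ≤ 1) (hx : 4 ≤ Hrho x) :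
    Hrho (Hmul (Hinv y) x) ∈ Set.Icc (Hrho x / 4) (4 * Hrho x) := by
  have hupper := Hrho_Hmul_le (Hinv y) x
  have hlower := Hrho_Hmul_le y (Hmul (Hinv y) x)
  rw [Hrho_Hinv] at hupper
  rw [Hmul_Hinv_cancel_left] at hlower
  constructor <;> linarith

lemma Hrho_rpow_neg_mul_rpow (a b : ℝ) {x : H n} (hx : 0 < Hrho x) :
    Hrho x ^ (-a) * Hrho x ^ (-hQ n + a + b) = Hrho x ^ (b - hQ n) := by
  rw [← Real.rpow_add hx]
  ring_nf

lemma Kker_le (a b : ℝ) {x y : H n} (hy : Hrho y ≤ 1) (hx : 4 ≤ Hrho x) :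
    Kker a b x y ≤ (4 : ℝ) ^ |-hQ n + a + b| * Hrho x ^ (b - hQ n) * Hrho y ^ (-b) := by
  have hx0 : 0 < Hrho x := by linarith
  have hcmp := Real.rpow_le_rpow_abs_mul_of_mem_Icc (-hQ n + a + b) four_pos hx0
    (Hrho_Hmul_Hinv_mem_Icc hy hx)
  calc Kker a b x y
      = Hrho x ^ (-a) * Hrho (Hmul (Hinv y) x) ^ (-hQ n + a + b) * Hrho y ^ (-b) := rfl
    _ ≤ Hrho x ^ (-a) * ((4 : ℝ) ^ |-hQ n + a + b| * Hrho x ^ (-hQ n + a + b)) *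
          Hrho y ^ (-b) := by
        gcongr
        exact Real.rpow_nonneg (Hrho_nonneg y) _
    _ = _ := by rw [← Hrho_rpow_neg_mul_rpow a b hx0]; ring

lemma le_Kker (a : ℝ) {b : ℝ} (hb : 0 ≤ b) {x y : H n} (hy0 : 0 < Hrho y) (hy : Hrho y ≤ 1)
    (hx : 4 ≤ Hrho x) :
    ((4 : ℝ) ^ |-hQ n + a + b|)⁻¹ * Hrho x ^ (b - hQ n) ≤ Kker a b x y := by
  have hx0 : 0 < Hrho x := by linarith
  have hcmp := Real.inv_rpow_abs_mul_le_rpow_of_mem_Icc (-hQ n + a + b) four_pos hx0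
    (Hrho_Hmul_Hinv_mem_Icc hy hx)
  have hyb : 1 ≤ Hrho y ^ (-b) :=
    Real.one_le_rpow_of_pos_of_le_one_of_nonpos hy0 hy (neg_nonpos.2 hb)
  rw [← Hrho_rpow_neg_mul_rpow a b hx0, Kker]
  calc ((4 : ℝ) ^ |-hQ n + a + b|)⁻¹ * (Hrho x ^ (-a) * Hrho x ^ (-hQ n + a + b))
      = Hrho x ^ (-a) * (((4 : ℝ) ^ |-hQ n + a + b|)⁻¹ * Hrho x ^ (-hQ n + a + b)) := by ring
    _ ≤ Hrho x ^ (-a) * Hrho (Hmul (Hinv y) x) ^ (-hQ n + a + b) := by gcongr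
    _ ≤ _ := le_mul_of_one_le_right
        (mul_nonneg (Real.rpow_nonneg hx0.le _) (Real.rpow_nonneg (Hrho_nonneg _) _)) hyb

def truncAbsRpow (α : ℝ) : ℝ → ℝ := (Set.Icc (-1) 1).indicator fun t => |t| ^ (-α)

lemma truncAbsRpow_nonneg (α t : ℝ) : 0 ≤ truncAbsRpow α t :=
  Set.indicator_nonneg (fun t _ => Real.rpow_nonneg (abs_nonneg t) _) t

lemma integrable_truncAbsRpow {α : ℝ} (hα : α < 1) : Integrable (truncAbsRpow α) := by
  have hpos : ∀ c, 0 < c → IntervalIntegrable (fun t : ℝ => |t| ^ (-α)) volume 0 c := by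
    intro c hc
    refine (intervalIntegral.intervalIntegrable_rpow' (by linarith : -1 < -α)).congr ?_
    intro t ht
    rw [Set.uIoc_of_le hc.le] at ht
    simp [abs_of_pos ht.1]
  have h := intervalIntegrable_of_even (fun t => by rw [abs_neg]) hpos (a := -1) (b := 1)
  rw [intervalIntegrable_iff_integrableOn_Icc_of_le (by norm_num)] at h
  exact (integrable_indicator_iff measurableSet_Icc).2 h

def Hmajorant (α : ℝ) (y : H n) : ℝ :=
  (∏ j, truncAbsRpow α (y.1 j).re * truncAbsRpow α (y.1 j).im) * truncAbsRpow α y.2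

lemma integrable_Hmajorant {α : ℝ} (hα : α < 1) : Integrable (Hmajorant (n := n) α) := by
  have h := integrable_truncAbsRpow hα
  have hC : Integrable fun w : ℂ => truncAbsRpow α w.re * truncAbsRpow α w.im :=
    (Complex.volume_preserving_equiv_real_prod.integrable_comp_emb
      Complex.measurableEquivRealProd.measurableEmbedding
      (g := fun p : ℝ × ℝ => truncAbsRpow α p.1 * truncAbsRpow α p.2)).2
      (by rw [Measure.volume_eq_prod]; exact h.mul_prod h)
  rw [Measure.volume_eq_prod]
  exact (Integrable.fintype_prod (𝕜 := ℝ) fun _ => hC).mul_prod h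

lemma ae_re_ne_zero_and_im_ne_zero : ∀ᵐ w : ℂ, w.re ≠ 0 ∧ w.im ≠ 0 := by
  have h : ∀ᵐ p : ℝ × ℝ, p.1 ≠ 0 ∧ p.2 ≠ 0 := by
    rw [Measure.volume_eq_prod]
    exact (Measure.quasiMeasurePreserving_fst.ae (Measure.ae_ne volume 0)).and
      (Measure.quasiMeasurePreserving_snd.ae (Measure.ae_ne volume 0))
  exact Complex.volume_preserving_equiv_real_prod.quasiMeasurePreserving.ae h

-- Needed because `|0| ^ (-α) = 0` in Mathlib: `Hmajorant` fails to dominate `Hrho ^ (-b)` on the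
-- coordinate hyperplanes.
lemma ae_coords_ne_zero :
    ∀ᵐ y : H n, y.2 ≠ 0 ∧ ∀ j, (y.1 j).re ≠ 0 ∧ (y.1 j).im ≠ 0 := by
  have hz : ∀ᵐ z : Fin n → ℂ, ∀ j, (z j).re ≠ 0 ∧ (z j).im ≠ 0 := by
    rw [volume_pi]
    exact ae_all_iff.2 fun j =>
      (Measure.quasiMeasurePreserving_eval (fun _ : Fin n => (volume : Measure ℂ)) j).ae
        (p := fun w : ℂ => w.re ≠ 0 ∧ w.im ≠ 0) ae_re_ne_zero_and_im_ne_zero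
  rw [Measure.volume_eq_prod]
  exact (Measure.quasiMeasurePreserving_snd.ae (Measure.ae_ne volume 0)).and
    (Measure.quasiMeasurePreserving_fst.ae hz)

lemma rpow_neg_le_truncAbsRpow {α r t : ℝ} (hα : 0 ≤ α) (ht : t ≠ 0) (htr : |t| ≤ r)
    (hr : r ≤ 1) : r ^ (-α) ≤ truncAbsRpow α t := by
  rw [truncAbsRpow, Set.indicator_of_mem (Set.mem_Icc.2 (abs_le.1 (htr.trans hr)))]
  exact Real.rpow_le_rpow_of_nonpos (abs_pos.2 ht) htr (neg_nonpos.2 hα)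

lemma rpow_neg_eq_prod_mul {α b : ℝ} (hαb : α * hQ n = b) {ρ : ℝ} (hρ : 0 < ρ) :
    ρ ^ (-b) = (∏ _j : Fin n, ρ ^ (-α) * ρ ^ (-α)) * (ρ ^ 2) ^ (-α) := by
  rw [Finset.prod_const, Finset.card_univ, Fintype.card_fin, ← Real.rpow_add hρ,
    ← Real.rpow_mul_natCast hρ.le, ← Real.rpow_natCast_mul hρ.le, ← Real.rpow_add hρ, ← hαb, hQ]
  push_cast
  ring_nf

lemma Hrho_rpow_neg_le_Hmajorant {b : ℝ} (hb : 0 ≤ b) {y : H n} (hy : Hrho y ≤ 1)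
    (hcoords : y.2 ≠ 0 ∧ ∀ j, (y.1 j).re ≠ 0 ∧ (y.1 j).im ≠ 0) :
    Hrho y ^ (-b) ≤ Hmajorant (b / hQ n) y := by
  have hQ0 : 0 < hQ n := by unfold hQ; positivity
  have hα : 0 ≤ b / hQ n := div_nonneg hb hQ0.le
  have hρ := Hrho_pos_of_snd_ne_zero hcoords.1
  have hcoord : ∀ j, Hrho y ^ (-(b / hQ n)) * Hrho y ^ (-(b / hQ n)) ≤
      truncAbsRpow (b / hQ n) (y.1 j).re * truncAbsRpow (b / hQ n) (y.1 j).im := fun j =>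
    mul_le_mul
      (rpow_neg_le_truncAbsRpow hα (hcoords.2 j).1
        ((Complex.abs_re_le_norm _).trans (norm_apply_le_Hrho y j)) hy)
      (rpow_neg_le_truncAbsRpow hα (hcoords.2 j).2
        ((Complex.abs_im_le_norm _).trans (norm_apply_le_Hrho y j)) hy)
      (Real.rpow_nonneg hρ.le _) (truncAbsRpow_nonneg _ _)
  have hsnd : (Hrho y ^ 2) ^ (-(b / hQ n)) ≤ truncAbsRpow (b / hQ n) y.2 :=
    rpow_neg_le_truncAbsRpow hα hcoords.1 (abs_snd_le_Hrho_sq y) (pow_le_one₀ hρ.le hy)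
  rw [rpow_neg_eq_prod_mul (div_mul_cancel₀ b hQ0.ne') hρ, Hmajorant]
  exact mul_le_mul (Finset.prod_le_prod (fun _ _ => by positivity) fun j _ => hcoord j) hsnd
    (by positivity) (Finset.prod_nonneg fun _ _ => mul_nonneg (truncAbsRpow_nonneg _ _)
      (truncAbsRpow_nonneg _ _))

lemma measurableSet_Hrho_le_one : MeasurableSet {y : H n | Hrho y ≤ 1} :=
  measurableSet_le continuous_Hrho.measurable measurable_const

lemma volume_Hrho_le_one_pos : 0 < volume {y : H n | Hrho y ≤ 1} := by
  have hopen : IsOpen {y : H n | Hrho y < 1} := isOpen_lt continuous_Hrho continuous_const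
  calc 0 < volume {y : H n | Hrho y < 1} :=
        hopen.measure_pos volume ⟨0, by simp [Hrho_zero]⟩
    _ ≤ volume {y : H n | Hrho y ≤ 1} := measure_mono fun y (hy : Hrho y < 1) => hy.le

lemma volume_Hrho_le_one_lt_top : volume {y : H n | Hrho y ≤ 1} < ⊤ := by
  refine (measure_mono fun y (hy : Hrho y ≤ 1) => ?_).trans_lt
    (measure_closedBall_lt_top (x := (0 : H n)) (r := 1))
  rw [mem_closedBall_zero_iff, Prod.norm_def, max_le_iff, pi_norm_le_iff_of_nonneg zero_le_one]
  exact ⟨fun j => (norm_apply_le_Hrho y j).trans hy,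
    (abs_snd_le_Hrho_sq y).trans (pow_le_one₀ (Hrho_nonneg y) hy)⟩

lemma setLIntegral_Hrho_rpow_neg_lt_top {b : ℝ} (hb : 0 ≤ b) (hbQ : b < hQ n) :
    ∫⁻ y in {y : H n | Hrho y ≤ 1}, ENNReal.ofReal (Hrho y ^ (-b)) < ⊤ := by
  have hα : b / hQ n < 1 := (div_lt_one (by unfold hQ; positivity)).2 hbQ
  have hle : ∀ᵐ y ∂volume.restrict {y : H n | Hrho y ≤ 1},
      ENNReal.ofReal (Hrho y ^ (-b)) ≤ ENNReal.ofReal (Hmajorant (b / hQ n) y) := by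
    rw [ae_restrict_iff' measurableSet_Hrho_le_one]
    filter_upwards [ae_coords_ne_zero] with y hcoords hy
    exact ENNReal.ofReal_le_ofReal (Hrho_rpow_neg_le_Hmajorant hb hy hcoords)
  calc _ ≤ ∫⁻ y in {y : H n | Hrho y ≤ 1}, ENNReal.ofReal (Hmajorant (b / hQ n) y) :=
        lintegral_mono_ae hle
    _ ≤ ∫⁻ y, ENNReal.ofReal (Hmajorant (b / hQ n) y) := setLIntegral_le_lintegral _ _
    _ < ⊤ := (integrable_Hmajorant hα).lintegral_lt_top

lemma setLIntegral_Kker_le (a b : ℝ) {x : H n} (hx : 4 ≤ Hrho x) :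
    ∫⁻ y in {y : H n | Hrho y ≤ 1}, ENNReal.ofReal (Kker a b x y) ≤
      ENNReal.ofReal ((4 : ℝ) ^ |-hQ n + a + b| * Hrho x ^ (b - hQ n)) *
        ∫⁻ y in {y : H n | Hrho y ≤ 1}, ENNReal.ofReal (Hrho y ^ (-b)) := by
  rw [← lintegral_const_mul' _ _ ENNReal.ofReal_ne_top]
  refine lintegral_mono_ae ((ae_restrict_iff' measurableSet_Hrho_le_one).2
    (.of_forall fun y hy => ?_))
  rw [← ENNReal.ofReal_mul (by positivity)]
  exact ENNReal.ofReal_le_ofReal (Kker_le a b hy hx)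

lemma le_setLIntegral_Kker (a : ℝ) {b : ℝ} (hb : 0 ≤ b) {x : H n} (hx : 4 ≤ Hrho x) :
    ENNReal.ofReal (((4 : ℝ) ^ |-hQ n + a + b|)⁻¹ * Hrho x ^ (b - hQ n)) *
        volume {y : H n | Hrho y ≤ 1} ≤
      ∫⁻ y in {y : H n | Hrho y ≤ 1}, ENNReal.ofReal (Kker a b x y) := by
  rw [← setLIntegral_const]
  refine lintegral_mono_ae ((ae_restrict_iff' measurableSet_Hrho_le_one).2 ?_)
  filter_upwards [ae_coords_ne_zero] with y hcoords hy
  exact ENNReal.ofReal_le_ofReal (le_Kker a hb (Hrho_pos_of_snd_ne_zero hcoords.1) hy hx)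

end Heisenberg

open Heisenberg

theorem stmt13_general (n : ℕ) (a b : ℝ)
    (hb0 : 0 ≤ b) (hbQ : b < hQ n) :
    ∃ c₁ c₂ R₀ : ℝ, 0 < c₁ ∧ 0 < c₂ ∧ 1 ≤ R₀ ∧
      ∀ x : H n, R₀ ≤ Hrho x →
        ENNReal.ofReal (c₁ * Hrho x ^ (b - hQ n)) ≤
          (∫⁻ y in {y : H n | Hrho y ≤ 1}, ENNReal.ofReal (Kker a b x y)) ∧
        (∫⁻ y in {y : H n | Hrho y ≤ 1}, ENNReal.ofReal (Kker a b x y)) ≤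
          ENNReal.ofReal (c₂ * Hrho x ^ (b - hQ n)) := by
  set M : ℝ := 4 ^ |-hQ n + a + b|
  set V := volume {y : H n | Hrho y ≤ 1}
  set I := ∫⁻ y in {y : H n | Hrho y ≤ 1}, ENNReal.ofReal (Hrho y ^ (-b))
  have hM : 0 < M := by positivity
  have hVtop : V ≠ ⊤ := volume_Hrho_le_one_lt_top.ne
  have hItop : I ≠ ⊤ := (setLIntegral_Hrho_rpow_neg_lt_top hb0 hbQ).ne
  refine ⟨M⁻¹ * V.toReal, M * (I.toReal + 1), 4,
    mul_pos (inv_pos.2 hM) (ENNReal.toReal_pos volume_Hrho_le_one_pos.ne' hVtop),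
    mul_pos hM (by positivity), by norm_num, fun x hx => ⟨?_, ?_⟩⟩
  · calc ENNReal.ofReal (M⁻¹ * V.toReal * Hrho x ^ (b - hQ n))
        = ENNReal.ofReal (M⁻¹ * Hrho x ^ (b - hQ n)) * V := by
          rw [mul_right_comm, ENNReal.ofReal_mul (by positivity), ENNReal.ofReal_toReal hVtop]
      _ ≤ _ := le_setLIntegral_Kker a hb0 hx
  · calc _ ≤ ENNReal.ofReal (M * Hrho x ^ (b - hQ n)) * I := setLIntegral_Kker_le a b hx
      _ ≤ ENNReal.ofReal (M * Hrho x ^ (b - hQ n)) * ENNReal.ofReal (I.toReal + 1) := by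
          gcongr
          rw [← ENNReal.ofReal_toReal hItop]
          exact ENNReal.ofReal_le_ofReal (by simp)
      _ = ENNReal.ofReal (M * (I.toReal + 1) * Hrho x ^ (b - hQ n)) := by
          rw [← ENNReal.ofReal_mul (by positivity)]
          ring_nf

theorem stmt13 (n : ℕ) (hn : 0 < n) (a b : ℝ) (hab : 0 < a + b)
    (hb0 : 0 ≤ b) (hbQ : b < hQ n) :
    ∃ c₁ c₂ R₀ : ℝ, 0 < c₁ ∧ 0 < c₂ ∧ 1 ≤ R₀ ∧
      ∀ x : H n, R₀ ≤ Hrho x →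
        ENNReal.ofReal (c₁ * Hrho x ^ (b - hQ n)) ≤
          (∫⁻ y in {y : H n | Hrho y ≤ 1}, ENNReal.ofReal (Kker a b x y)) ∧
        (∫⁻ y in {y : H n | Hrho y ≤ 1}, ENNReal.ofReal (Kker a b x y)) ≤
          ENNReal.ofReal (c₂ * Hrho x ^ (b - hQ n)) :=
  stmt13_general n a b hb0 hbQ

end
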